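/- arXiv:1603.06413 — 3 statements merged into one kernel-verified Lean document; each statement's English description precedes it below -/
import Mathlib

section
/- For vectors z, w in R^l with the second-order cone K^l = {x = (x_0, x_bullet) in R × R^{l-1} : x_0 ≥ ‖x_bullet‖}, one has: z, w ∈ K^l and ⟨z,w⟩ = 0 if and only if z, w ∈ K^l and z ∘ w = 0, where z ∘ w := (⟨z,w⟩, w_0 z_bullet + z_0 w_bullet) is the Jordan product. -/
/-!
If `z, w ∈ K` and `⟨z, w⟩ = 0` then `⟨z•, w•⟩ = -z₀ w₀`, and expanding
`‖w₀ z• + z₀ w•‖² = w₀² ‖z•‖² + z₀² ‖w•‖² + 2 z₀ w₀ ⟨z•, w•⟩ ≤ 2 z₀² w₀² - 2 z₀² w₀² = 0`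
shows that the tail of `z ∘ w` vanishes as well.
-/

/-- The second-order cone `K^{k+1} ⊆ ℝ^{k+1}`, with head component at index `0`. -/
def soc (k : ℕ) : Set (EuclideanSpace ℝ (Fin (k + 1))) :=
  {x | Real.sqrt (∑ j : Fin k, x j.succ ^ 2) ≤ x 0}

/-- The Jordan product `z ∘ w = (⟨z,w⟩, w₀ z_• + z₀ w_•)`. -/
noncomputable def jordan {k : ℕ} (z w : EuclideanSpace ℝ (Fin (k + 1))) :
    EuclideanSpace ℝ (Fin (k + 1)) :=
  WithLp.toLp 2 (fun idx => Fin.cases (∑ i, z i * w i) (fun j => w 0 * z j.succ + z 0 * w j.succ) idx)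

theorem sum_sq_tail_le_of_mem_soc {k : ℕ} {x : EuclideanSpace ℝ (Fin (k + 1))}
    (hx : x ∈ soc k) : ∑ j : Fin k, x j.succ ^ 2 ≤ x 0 ^ 2 :=
  (Real.sqrt_le_iff.1 hx).2

theorem jordan_eq_zero_iff {k : ℕ} {z w : EuclideanSpace ℝ (Fin (k + 1))} :
    jordan z w = 0 ↔
      ∑ i, z i * w i = 0 ∧ ∀ j : Fin k, w 0 * z j.succ + z 0 * w j.succ = 0 := by
  simp [jordan, ← WithLp.ofLp_eq_zero, funext_iff, Fin.forall_fin_succ]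

theorem sum_sq_mul_add_mul_eq {ι : Type*} [Fintype ι] (a b : ℝ) (u v : ι → ℝ) :
    ∑ i, (b * u i + a * v i) ^ 2 =
      b ^ 2 * ∑ i, u i ^ 2 + a ^ 2 * ∑ i, v i ^ 2 + 2 * (a * b) * ∑ i, u i * v i := by
  simp only [Finset.mul_sum, ← Finset.sum_add_distrib]
  exact Finset.sum_congr rfl fun i _ => by ring

/-- An equality case of Cauchy–Schwarz. -/
theorem mul_add_mul_eq_zero_of_sum_mul_eq_neg {ι : Type*} [Fintype ι] {a b : ℝ}
    {u v : ι → ℝ} (hu : ∑ i, u i ^ 2 ≤ a ^ 2) (hv : ∑ i, v i ^ 2 ≤ b ^ 2)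
    (huv : ∑ i, u i * v i = -(a * b)) (i : ι) : b * u i + a * v i = 0 := by
  have hsum_nonpos : ∑ i, (b * u i + a * v i) ^ 2 ≤ 0 := by
    rw [sum_sq_mul_add_mul_eq, huv]
    nlinarith [mul_le_mul_of_nonneg_left hu (sq_nonneg b),
      mul_le_mul_of_nonneg_left hv (sq_nonneg a)]
  have hsum_zero := le_antisymm hsum_nonpos (Finset.sum_nonneg fun i _ => sq_nonneg _)
  exact pow_eq_zero_iff two_ne_zero |>.1 <|
    (Finset.sum_eq_zero_iff_of_nonneg fun i _ => sq_nonneg _).1 hsum_zero i (Finset.mem_univ i)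

theorem soc_complementarity_iff_jordan {k : ℕ} (z w : EuclideanSpace ℝ (Fin (k + 1))) :
    (z ∈ soc k ∧ w ∈ soc k ∧ ∑ i, z i * w i = 0) ↔
      (z ∈ soc k ∧ w ∈ soc k ∧ jordan z w = 0) := by
  constructor
  · rintro ⟨hz, hw, hzw⟩
    have htail : ∑ j : Fin k, z j.succ * w j.succ = -(z 0 * w 0) := by
      rw [Fin.sum_univ_succ] at hzw
      linarith
    exact ⟨hz, hw, jordan_eq_zero_iff.2 ⟨hzw, mul_add_mul_eq_zero_of_sum_mul_eq_neg
      (sum_sq_tail_le_of_mem_soc hz) (sum_sq_tail_le_of_mem_soc hw) htail⟩⟩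
  · rintro ⟨hz, hw, hjordan⟩
    exact ⟨hz, hw, (jordan_eq_zero_iff.1 hjordan).1⟩
end

section
/- Let A, B be m-th order n-dimensional tensors with A x^m > 0 for all x ∈ K \ {0}, where K is a product of second-order cones, and let F(x) = λ(x) A x^{m-1} − B x^{m-1} with λ(x) = B x^m / A x^m. If x̄ solves the variational inequality: x̄ ∈ K_0 and F(x̄)^T(z − x̄) ≥ 0 for all z ∈ K_0 := {x ∈ K : e^T x = 1}, then (x̄, λ̄) with λ̄ = λ(x̄) solves the second-order cone tensor eigenvalue complementarity problem: x̄ ∈ K, w := λ̄ A x̄^{m-1} − B x̄^{m-1} ∈ K, and ⟨x̄, w⟩ = 0, with x̄ ≠ 0. -/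
/-- Index type of `ℝ^{n₁} × ⋯ × ℝ^{n_r}` with blocks of sizes `n i + 1`;
`⟨i, 0⟩` is the head index of block `i`. -/
abbrev BIdx {r : ℕ} (n : Fin r → ℕ) := (i : Fin r) × Fin (n i + 1)

/-- Membership in the product of second-order cones `K = K^{n₁} × ⋯ × K^{n_r}`. -/
def inK {r : ℕ} (n : Fin r → ℕ) (x : BIdx n → ℝ) : Prop :=
  ∀ i, Real.sqrt (∑ j : Fin (n i), x ⟨i, j.succ⟩ ^ 2) ≤ x ⟨i, 0⟩

/-- `eᵀx = ∑ᵢ x^i₀`, the sum of the head components of `x`. -/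
def eT {r : ℕ} (n : Fin r → ℕ) (x : BIdx n → ℝ) : ℝ := ∑ i, x ⟨i, 0⟩


/-- `A x^{m} = ∑ a_{i₁…i_m} x_{i₁} ⋯ x_{i_m}`. -/
def tpow {m : ℕ} {ι : Type*} [Fintype ι] (A : (Fin m → ι) → ℝ) (x : ι → ℝ) : ℝ :=
  ∑ f : Fin m → ι, A f * ∏ j, x (f j)

/-- `(A x^{m})_k = ∑_{i₂,…,i_{m+1}} a_{k i₂…i_{m+1}} x_{i₂} ⋯ x_{i_{m+1}}`. -/
def tmap {m : ℕ} {ι : Type*} [Fintype ι] (A : (Fin (m + 1) → ι) → ℝ) (x : ι → ℝ)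
    (k : ι) : ℝ :=
  ∑ f : Fin m → ι, A (Fin.cons k f) * ∏ j, x (f j)

/-! The Euler-type identity `∑ₖ xₖ (A x^m)ₖ = A x^{m+1}` makes `F(x̄)` orthogonal to `x̄`, so the
variational inequality says that `⟪F(x̄), z⟫ ≥ 0` for every `z ∈ K₀`. Since `K₀` is a base of the
self-dual cone `K`, this puts `F(x̄)` in `K`: for block `i`, testing with the point of `K₀` whose
`i`-th block is `(1, -w̄ᵢ/‖w̄ᵢ‖)` gives `wᵢ₀ - ‖w̄ᵢ‖ ≥ 0`. -/

open Finset

section Euler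

variable {m : ℕ} {ι : Type*} [Fintype ι]

theorem sum_mul_tmap (A : (Fin (m + 1) → ι) → ℝ) (x : ι → ℝ) :
    ∑ k, x k * tmap A x k = tpow A x := by
  have hsplit : tpow A x
      = ∑ p : ι × (Fin m → ι), x p.1 * (A (Fin.cons p.1 p.2) * ∏ j, x (p.2 j)) := by
    refine (Fintype.sum_equiv (Fin.consEquiv fun _ => ι) _ _ fun p => ?_).symm
    simp only [Fin.consEquiv, Equiv.coe_fn_mk, Fin.prod_univ_succ, Fin.cons_zero, Fin.cons_succ]
    ring
  simp_rw [hsplit, Fintype.sum_prod_type, tmap, mul_sum]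

theorem sum_mul_div_tmap_sub_tmap_eq_zero (A B : (Fin (m + 1) → ι) → ℝ) {x : ι → ℝ}
    (hA : tpow A x ≠ 0) :
    ∑ k, x k * (tpow B x / tpow A x * tmap A x k - tmap B x k) = 0 := by
  simp_rw [mul_sub, sum_sub_distrib, mul_left_comm (x _), ← mul_sum, sum_mul_tmap,
    div_mul_cancel₀ _ hA, sub_self]

end Euler

section SecondOrderCone

variable {r : ℕ} {n : Fin r → ℕ}

theorem sum_blockIdx (f : BIdx n → ℝ) :
    ∑ k, f k = ∑ i, (f ⟨i, 0⟩ + ∑ j : Fin (n i), f ⟨i, j.succ⟩) := by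
  rw [Fintype.sum_sigma]
  exact sum_congr rfl fun i _ => Fin.sum_univ_succ _

noncomputable def blockTailNorm (w : BIdx n → ℝ) (i : Fin r) : ℝ :=
  √(∑ j : Fin (n i), w ⟨i, j.succ⟩ ^ 2)

theorem blockTailNorm_sq (w : BIdx n → ℝ) (i : Fin r) :
    blockTailNorm w i ^ 2 = ∑ j : Fin (n i), w ⟨i, j.succ⟩ ^ 2 :=
  Real.sq_sqrt (sum_nonneg fun _ _ => sq_nonneg _)

-- When `‖w̄ᵢ‖ = 0`, division by zero makes the tail `0`, which still lies in `K₀`.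
noncomputable def dualWitness (w : BIdx n → ℝ) (i : Fin r) : BIdx n → ℝ := fun k =>
  if k.1 = i then (if k.2 = 0 then 1 else -w k / blockTailNorm w i) else 0

theorem dualWitness_head (w : BIdx n → ℝ) (i i' : Fin r) :
    dualWitness w i ⟨i', 0⟩ = if i' = i then 1 else 0 := by
  simp [dualWitness]

theorem dualWitness_tail (w : BIdx n → ℝ) (i i' : Fin r) (j : Fin (n i')) :
    dualWitness w i ⟨i', j.succ⟩ =
      if i' = i then -w ⟨i', j.succ⟩ / blockTailNorm w i else 0 := by
  simp [dualWitness, Fin.succ_ne_zero]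

theorem eT_dualWitness (w : BIdx n → ℝ) (i : Fin r) : eT n (dualWitness w i) = 1 := by
  simp [eT, dualWitness_head]

theorem inK_dualWitness (w : BIdx n → ℝ) (i : Fin r) : inK n (dualWitness w i) := by
  intro i'
  simp_rw [dualWitness_head, dualWitness_tail]
  split_ifs with h
  · subst h
    have hsq : ∑ j : Fin (n i'), (-w ⟨i', j.succ⟩ / blockTailNorm w i') ^ 2
        = blockTailNorm w i' ^ 2 / blockTailNorm w i' ^ 2 := by
      simp_rw [div_pow, neg_sq, ← sum_div, blockTailNorm_sq]
    rw [hsq]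
    exact Real.sqrt_le_one.mpr (div_self_le_one _)
  · simp

theorem sum_mul_dualWitness (w : BIdx n → ℝ) (i : Fin r) :
    ∑ k, w k * dualWitness w i k = w ⟨i, 0⟩ - blockTailNorm w i := by
  have htail : ∑ j : Fin (n i), w ⟨i, j.succ⟩ * (-w ⟨i, j.succ⟩ / blockTailNorm w i)
      = -(blockTailNorm w i ^ 2 / blockTailNorm w i) := by
    simp_rw [mul_div_assoc', mul_neg, ← sq, neg_div, sum_neg_distrib, ← sum_div,
      blockTailNorm_sq]
  rw [sum_blockIdx, sum_eq_single i (fun i' _ hi' => by simp [dualWitness_head,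
    dualWitness_tail, hi']) (by simp)]
  simp only [dualWitness_head, dualWitness_tail, if_true, mul_one, htail]
  rw [sq, mul_self_div_self]
  ring

theorem inK_of_forall_sum_mul_nonneg {w : BIdx n → ℝ}
    (h : ∀ z, inK n z → eT n z = 1 → 0 ≤ ∑ k, w k * z k) : inK n w := by
  intro i
  change blockTailNorm w i ≤ w ⟨i, 0⟩
  have hw := h _ (inK_dualWitness w i) (eT_dualWitness w i)
  rw [sum_mul_dualWitness] at hw
  linarith

end SecondOrderCone

/-- If `x̄` solves the variational inequality `VIP(F, K₀)` with
`F(x) = λ(x) A x^m - B x^m`, `λ(x) = B x^{m+1}/A x^{m+1}`, and `A` is strictly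
`K`-positive, then `(x̄, λ(x̄))` solves the second-order cone tensor eigenvalue
complementarity problem. Here the tensors have order `m + 1`. -/
theorem vip_solution_solves_socteicp {r : ℕ} (n : Fin r → ℕ) {m : ℕ}
    (A B : (Fin (m + 1) → BIdx n) → ℝ)
    (hpos : ∀ x : BIdx n → ℝ, inK n x → x ≠ 0 → 0 < tpow A x)
    (x : BIdx n → ℝ) (hxK : inK n x) (hxe : eT n x = 1)
    (hvi : ∀ z : BIdx n → ℝ, inK n z ∧ eT n z = 1 →
      0 ≤ ∑ k, ((tpow B x / tpow A x) * tmap A x k - tmap B x k) * (z k - x k)) :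
    x ≠ 0 ∧ inK n x ∧
      inK n (fun k => (tpow B x / tpow A x) * tmap A x k - tmap B x k) ∧
      ∑ k, x k * ((tpow B x / tpow A x) * tmap A x k - tmap B x k) = 0 := by
  have hx0 : x ≠ 0 := by
    rintro rfl
    simp [eT] at hxe
  have horth := sum_mul_div_tmap_sub_tmap_eq_zero A B (hpos x hxK hx0).ne'
  refine ⟨hx0, hxK, inK_of_forall_sum_mul_nonneg fun z hzK hze => ?_, horth⟩
  have hvi_z := hvi z ⟨hzK, hze⟩
  simp_rw [mul_sub, sum_sub_distrib, mul_comm _ (x _), horth, sub_zero] at hvi_z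
  exact hvi_z
end

section
/- If A x^m > 0 for all x in the second-order cone K minus the origin (i.e., A is strictly K-positive), then the SOCTEiCP, which asks for nonzero x ∈ K and λ ∈ R with w := λ A x^{m-1} − B x^{m-1} ∈ K and ⟨x, w⟩ = 0, has at least one solution. -/
set_option maxHeartbeats 1000000

open Metric Set MeasureTheory RealInnerProductSpace

section BrouwerAux

local notation "E" d => EuclideanSpace ℝ (Fin d)

lemma smooth_approx {d : ℕ} (f : (E d) → (E d)) (hf : ContinuousOn f (closedBall 0 1))
    {ε : ℝ} (hε : 0 < ε) :
    ∃ g : (E d) → (E d), ContDiff ℝ 1 g ∧ ∀ x ∈ closedBall (0 : E d) 1, ‖g x - f x‖ ≤ ε := by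
  set B : Set (E d) := closedBall 0 1
  haveI : CompactSpace B := isCompact_iff_compactSpace.mp (isCompact_closedBall _ _)
  -- subalgebra of C¹-extendable functions
  set A : Subalgebra ℝ C(B, ℝ) :=
    { carrier := {φ : C(B, ℝ) | ∃ Φ : (E d) → ℝ, ContDiff ℝ 1 Φ ∧ ∀ x : B, Φ x = φ x}
      mul_mem' := by
        rintro φ ψ ⟨Φ, hΦ, hΦe⟩ ⟨Ψ, hΨ, hΨe⟩
        exact ⟨Φ * Ψ, hΦ.mul hΨ, fun x => by simp [hΦe x, hΨe x]⟩
      add_mem' := by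
        rintro φ ψ ⟨Φ, hΦ, hΦe⟩ ⟨Ψ, hΨ, hΨe⟩
        exact ⟨Φ + Ψ, hΦ.add hΨ, fun x => by simp [hΦe x, hΨe x]⟩
      algebraMap_mem' := fun c =>
        ⟨fun _ => c, contDiff_const, fun x => rfl⟩ }
  have hsep : A.SeparatesPoints := by
    intro x y hxy
    have : ∃ i, (x : E d) i ≠ (y : E d) i := by
      by_contra h
      push_neg at h
      exact hxy (Subtype.ext (PiLp.ext h))
    obtain ⟨i, hi⟩ := this
    refine ⟨_, ⟨⟨fun z : B => (z : E d) i, ?_⟩, ⟨EuclideanSpace.proj i, (EuclideanSpace.proj (𝕜 := ℝ) i).contDiff, fun x => rfl⟩, rfl⟩, hi⟩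
    exact (EuclideanSpace.proj (𝕜 := ℝ) i).continuous.comp continuous_subtype_val
  set ε' : ℝ := ε / (d + 1) with hε'def
  have hε' : 0 < ε' := by positivity
  have key : ∀ i : Fin d, ∃ Φ : (E d) → ℝ, ContDiff ℝ 1 Φ ∧
      ∀ x : B, ‖Φ x - f x i‖ ≤ ε' := by
    intro i
    have hcont : Continuous fun x : B => f x i := by
      exact ((EuclideanSpace.proj (𝕜 := ℝ) i).continuous).comp hf.restrict
    obtain ⟨g, hg⟩ := ContinuousMap.exists_mem_subalgebra_near_continuous_of_separatesPoints
      A hsep (fun x : B => f x i) hcont ε' hε'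
    obtain ⟨Φ, hΦ, hΦe⟩ := g.2
    exact ⟨Φ, hΦ, fun x => by rw [hΦe x]; exact (hg x).le⟩
  choose Φ hΦc hΦe using key
  refine ⟨fun v => (EuclideanSpace.equiv (Fin d) ℝ).symm (fun i => Φ i v), ?_, ?_⟩
  · apply (EuclideanSpace.equiv (Fin d) ℝ).symm.contDiff.comp
    exact contDiff_pi.mpr hΦc
  · intro x hx
    have hb : ∀ i : Fin d, ‖Φ i x - f x i‖ ≤ ε' := fun i => hΦe i ⟨x, hx⟩
    set y : E d := (EuclideanSpace.equiv (Fin d) ℝ).symm (fun i => Φ i x - f x i) with hy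
    have hyi : ∀ i, y i = Φ i x - f x i := fun i => rfl
    have : ‖y‖ ≤ Real.sqrt (↑d * ε' ^ 2) := by
      rw [EuclideanSpace.norm_eq]
      apply Real.sqrt_le_sqrt
      calc ∑ i, ‖y i‖ ^ 2 ≤ ∑ _i : Fin d, ε' ^ 2 := by
            apply Finset.sum_le_sum
            intro i _
            rw [hyi i]
            exact pow_le_pow_left₀ (norm_nonneg _) (hb i) 2
        _ = ↑d * ε' ^ 2 := by simp [Finset.sum_const, mul_comm]
    have h2 : Real.sqrt (↑d * ε' ^ 2) ≤ (d + 1) * ε' := by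
      rw [show (↑d * ε' ^ 2 : ℝ) = (Real.sqrt d * ε')^2 by
        rw [mul_pow, Real.sq_sqrt (by positivity)]]
      rw [Real.sqrt_sq (by positivity)]
      have : Real.sqrt d ≤ d + 1 := by
        calc Real.sqrt d ≤ Real.sqrt ((d+1)^2) := by
              apply Real.sqrt_le_sqrt; nlinarith [Nat.cast_nonneg (α := ℝ) d]
          _ = d + 1 := Real.sqrt_sq (by positivity)
      nlinarith
    have heq : (fun v => (EuclideanSpace.equiv (Fin d) ℝ).symm (fun i => Φ i v)) x - f x
        = y := by
      ext i; rfl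
    rw [heq]
    calc ‖y‖ ≤ Real.sqrt (↑d * ε' ^ 2) := this
      _ ≤ (d+1) * ε' := h2
      _ = ε := by rw [hε'def]; field_simp

variable {F : Type*} [NormedAddCommGroup F] [InnerProductSpace ℝ F]

lemma retraction_construction (g : F → F) (hg : ContDiff ℝ 1 g) {ρ : ℝ} (hρ : ρ < 1)
    (hg1 : ∀ x ∈ closedBall (0 : F) 1, ‖g x‖ ≤ ρ) (hg2 : ∀ x ∈ closedBall (0 : F) 1, g x ≠ x) :
    ∃ (U : Set F) (h : F → F), IsOpen U ∧ closedBall (0 : F) 1 ⊆ U ∧ ContDiffOn ℝ 1 h U ∧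
      (∀ x ∈ U, ⟪x + h x, x + h x⟫ = 1) ∧ (∀ x, ‖x‖ = 1 → h x = 0) := by
  set B : Set F := closedBall 0 1 with hB
  set v : F → F := fun x => x - g x with hv
  have hvc : ContDiff ℝ 1 v := contDiff_id.sub hg
  set q : F → ℝ := fun x => ⟪x, x⟫ with hq
  set c : F → ℝ := fun x => ⟪x, v x⟫ with hc
  set a : F → ℝ := fun x => ⟪v x, v x⟫ with ha
  set D : F → ℝ := fun x => c x ^ 2 + a x * (1 - q x) with hD
  have hqc : ContDiff ℝ 1 q := ContDiff.inner ℝ contDiff_id contDiff_id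
  have hcc : ContDiff ℝ 1 c := ContDiff.inner ℝ contDiff_id hvc
  have hac : ContDiff ℝ 1 a := ContDiff.inner ℝ hvc hvc
  have hDc : ContDiff ℝ 1 D := by
    apply ContDiff.add (hcc.pow 2)
    exact hac.mul (contDiff_const.sub hqc)
  set U : Set F := {x | v x ≠ 0 ∧ 0 < D x} with hU
  have hUopen : IsOpen U := by
    have h1 : IsOpen {x | v x ≠ 0} := isOpen_compl_iff.mpr (isClosed_singleton.preimage hvc.continuous)
    have h2 : IsOpen {x | 0 < D x} := isOpen_Ioi.preimage hDc.continuous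
    exact h1.inter h2
  -- B ⊆ U
  have hq_norm : ∀ x, q x = ‖x‖ ^ 2 := fun x => real_inner_self_eq_norm_sq x
  have ha_norm : ∀ x, a x = ‖v x‖ ^ 2 := fun x => real_inner_self_eq_norm_sq (v x)
  have hcpos : ∀ x ∈ B, ‖x‖ = 1 → 1 - ρ ≤ c x := by
    intro x hx hnx
    have : c x = q x - ⟪x, g x⟫ := by
      simp only [hc, hv, hq, inner_sub_right]
    rw [this, hq_norm, hnx]
    have := real_inner_le_norm x (g x)
    have hb := hg1 x hx
    nlinarith
  have hBU : B ⊆ U := by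
    intro x hx
    have hv0 : v x ≠ 0 := fun h0 => hg2 x hx (by rwa [hv, sub_eq_zero, eq_comm] at h0)
    refine ⟨hv0, ?_⟩
    have hq1 : q x ≤ 1 := by
      rw [hq_norm]
      have : ‖x‖ ≤ 1 := mem_closedBall_zero_iff.mp hx
      nlinarith [norm_nonneg x]
    have hDx : D x = c x ^ 2 + a x * (1 - q x) := rfl
    rcases lt_or_eq_of_le hq1 with hlt | heq
    · have hap : 0 < a x := by
        rw [ha_norm]
        exact pow_pos (norm_pos_iff.mpr hv0) 2
      have : 0 < a x * (1 - q x) := mul_pos hap (by linarith)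
      rw [hDx]
      nlinarith [sq_nonneg (c x)]
    · have hnx : ‖x‖ = 1 := by
        rw [hq_norm] at heq
        nlinarith [norm_nonneg x]
      have hcx := hcpos x hx hnx
      have hcp : 0 < c x := by linarith
      rw [hDx, heq]
      nlinarith
  set t : F → ℝ := fun x => (Real.sqrt (D x) - c x) / a x with ht
  have htc : ContDiffOn ℝ 1 t U := by
    apply ContDiffOn.div
    · apply ContDiffOn.sub _ hcc.contDiffOn
      intro x hx
      exact ((Real.contDiffAt_sqrt hx.2.ne').comp x hDc.contDiffAt).contDiffWithinAt
    · exact hac.contDiffOn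
    · intro x hx
      rw [ha_norm]
      exact (pow_pos (norm_pos_iff.mpr hx.1) 2).ne'
  refine ⟨U, fun x => t x • v x, hUopen, hBU, htc.smul hvc.contDiffOn, ?_, ?_⟩
  · intro x hx
    have hane : a x ≠ 0 := by
      rw [ha_norm]
      exact (pow_pos (norm_pos_iff.mpr hx.1) 2).ne'
    have hs2 : Real.sqrt (D x) ^ 2 = c x ^ 2 + a x * (1 - q x) := Real.sq_sqrt hx.2.le
    have htx : t x * a x = Real.sqrt (D x) - c x := div_mul_cancel₀ _ hane
    have expand : ⟪x + t x • v x, x + t x • v x⟫ = q x + 2 * (t x * c x) + t x ^ 2 * a x := by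
      rw [real_inner_add_add_self, real_inner_smul_right, real_inner_smul_left,
        real_inner_smul_right]
      simp only [hq, hc, ha]; ring
    rw [expand]
    have goal2 : (q x + 2 * (t x * c x) + t x ^ 2 * a x) * a x = 1 * a x := by
      linear_combination (t x * a x + c x + Real.sqrt (D x)) * htx + hs2
    exact mul_right_cancel₀ hane goal2
  · intro x hnx
    have hxB : x ∈ B := by
      rw [hB, mem_closedBall_zero_iff, hnx]
    have hq1 : q x = 1 := by rw [hq_norm, hnx]; ring
    have hD1 : D x = c x ^ 2 := by
      have hDx : D x = c x ^ 2 + a x * (1 - q x) := rfl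
      rw [hDx, hq1]; ring
    have hcx : 0 < c x := lt_of_lt_of_le (by linarith) (hcpos x hxB hnx)
    have : Real.sqrt (D x) = c x := by
      rw [hD1, Real.sqrt_sq hcx.le]
    rw [ht]
    simp [this]

local notation "E'" d => EuclideanSpace ℝ (Fin (d + 1))

lemma no_retraction {d : ℕ} (U : Set (E' d)) (h : (E' d) → (E' d))
    (hUopen : IsOpen U) (hBU : closedBall 0 1 ⊆ U) (hh : ContDiffOn ℝ 1 h U)
    (hid : ∀ x ∈ U, ⟪x + h x, x + h x⟫ = 1) (hsph : ∀ x, ‖x‖ = 1 → h x = 0) : False := by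
  haveI : Nontrivial (E' d) := by
    refine ⟨EuclideanSpace.single 0 1, 0, fun hcon => ?_⟩
    have : (EuclideanSpace.single (0 : Fin (d+1)) (1:ℝ)) 0 = (0 : E' d) 0 := by rw [hcon]
    simpa using this
  set B : Set (E' d) := closedBall 0 1 with hBdef
  have hBcomp : IsCompact B := isCompact_closedBall _ _
  -- a slightly larger ball inside U
  obtain ⟨δ, hδpos, hδsub⟩ := hBcomp.exists_cthickening_subset_open hUopen hBU
  set B' : Set (E' d) := closedBall 0 (1 + δ) with hB'def
  have hB'U : B' ⊆ U := by
    rw [hB'def, show (1 + δ) = δ + 1 by ring, ← cthickening_closedBall hδpos.le zero_le_one]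
    exact hδsub
  have hBB' : B ⊆ B' := closedBall_subset_closedBall (by linarith)
  have hB'comp : IsCompact B' := isCompact_closedBall _ _
  have hB'conv : Convex ℝ B' := convex_closedBall _ _
  -- differentiability data
  have hdiffU : ∀ x ∈ U, HasFDerivAt h (fderiv ℝ h x) x := by
    intro x hx
    exact ((hh.contDiffAt (hUopen.mem_nhds hx)).differentiableAt one_ne_zero).hasFDerivAt
  have hfcont : ContinuousOn (fderiv ℝ h) U := hh.continuousOn_fderiv_of_isOpen hUopen le_rfl
  obtain ⟨M0, hM0⟩ := hB'comp.exists_bound_of_continuousOn (hfcont.mono hB'U)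
  set M : ℝ := max M0 0 with hMdef
  have hM : ∀ x ∈ B', ‖fderiv ℝ h x‖ ≤ M := fun x hx => le_max_of_le_left (hM0 x hx)
  have hMnn : 0 ≤ M := le_max_right _ _
  have hlip : LipschitzOnWith M.toNNReal h B' := by
    apply Convex.lipschitzOnWith_of_nnnorm_fderiv_le
      (fun x hx => ((hh.contDiffAt (hUopen.mem_nhds (hB'U hx))).differentiableAt one_ne_zero))
      (fun x hx => ?_) hB'conv
    rw [← NNReal.coe_le_coe, coe_nnnorm, Real.coe_toNNReal _ hMnn]
    exact hM x hx
  obtain ⟨Ch0, hCh0⟩ := hB'comp.exists_bound_of_continuousOn (hh.continuousOn.mono hB'U)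
  set Ch : ℝ := max Ch0 1 with hChdef
  have hCh : ∀ x ∈ B', ‖h x‖ ≤ Ch := fun x hx => le_max_of_le_left (hCh0 x hx)
  have hChpos : (0:ℝ) < Ch := lt_of_lt_of_le one_pos (le_max_right _ _)
  set τ₀ : ℝ := min (1 / (2 * (M + 1))) (min (1 / (2 * Ch)) 1) with hτ₀def
  have hτ₀pos : 0 < τ₀ := by
    apply lt_min (by positivity) (lt_min (by positivity) one_pos)
  have hτ₀M : τ₀ * M < 1 := by
    have h1 : τ₀ ≤ 1 / (2 * (M + 1)) := min_le_left _ _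
    have : τ₀ * M ≤ (1 / (2 * (M + 1))) * M := by
      apply mul_le_mul_of_nonneg_right h1 hMnn
    have hM1 : (1 / (2 * (M + 1))) * M < 1 := by
      rw [div_mul_eq_mul_div, div_lt_one (by positivity)]
      nlinarith
    linarith
  have hτ₀Ch : τ₀ * Ch ≤ 1 / 2 := by
    have h1 : τ₀ ≤ 1 / (2 * Ch) := le_trans (min_le_right _ _) (min_le_left _ _)
    calc τ₀ * Ch ≤ (1 / (2 * Ch)) * Ch := mul_le_mul_of_nonneg_right h1 hChpos.le
      _ = 1 / 2 := by field_simp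
  have hτ₀1 : τ₀ ≤ 1 := le_trans (min_le_right _ _) (min_le_right _ _)
  -- the homotopy
  set f : ℝ → (E' d) → (E' d) := fun τ x => x + τ • h x with hfdef
  set T : ℝ → (E' d) → ((E' d) →L[ℝ] (E' d)) :=
    fun τ x => ContinuousLinearMap.id ℝ (E' d) + τ • fderiv ℝ h x with hTdef
  have hfderiv : ∀ (τ : ℝ), ∀ x ∈ U, HasFDerivAt (f τ) (T τ x) x := by
    intro τ x hx
    exact (hasFDerivAt_id x).add ((hdiffU x hx).const_smul τ)
  -- injectivity on B'
  have hinj : ∀ τ ∈ Icc (0:ℝ) τ₀, InjOn (f τ) B' := by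
    rintro τ ⟨hτ0, hττ₀⟩ x hx y hy hxy
    have hxyeq : x - y = τ • (h y - h x) := by
      have : x + τ • h x = y + τ • h y := hxy
      rw [smul_sub]
      abel_nf
      linear_combination (norm := module) this
    have h1 : ‖h y - h x‖ ≤ M * ‖y - x‖ := by
      have := hlip.dist_le_mul y hy x hx
      rw [dist_eq_norm, dist_eq_norm] at this
      calc ‖h y - h x‖ ≤ ↑M.toNNReal * ‖y - x‖ := this
        _ = M * ‖y - x‖ := by rw [Real.coe_toNNReal _ hMnn]
    have hnorm : ‖x - y‖ ≤ τ * M * ‖x - y‖ := by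
      calc ‖x - y‖ = τ * ‖h y - h x‖ := by
            rw [hxyeq, norm_smul, Real.norm_eq_abs, abs_of_nonneg hτ0]
        _ ≤ τ * (M * ‖y - x‖) := mul_le_mul_of_nonneg_left h1 hτ0
        _ = τ * M * ‖y - x‖ := by ring
        _ = τ * M * ‖x - y‖ := by rw [norm_sub_rev]
    have hτM : τ * M < 1 := by
      rcases eq_or_lt_of_le hτ0 with h0 | h0
      · rw [← h0]; simpa using one_pos
      · calc τ * M ≤ τ₀ * M := mul_le_mul_of_nonneg_right hττ₀ hMnn
          _ < 1 := hτ₀M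
    by_contra hne
    have : 0 < ‖x - y‖ := by
      rw [norm_pos_iff, sub_ne_zero]
      exact fun hc => hne (hc ▸ rfl)
    nlinarith
  -- invertibility of T τ x
  have hunit : ∀ τ ∈ Icc (0:ℝ) τ₀, ∀ x ∈ B', ∃ e : (E' d) ≃L[ℝ] (E' d), (e : (E' d) →L[ℝ] (E' d)) = T τ x := by
    rintro τ ⟨hτ0, hττ₀⟩ x hx
    have hn : ‖-(τ • fderiv ℝ h x)‖ < 1 := by
      rw [norm_neg, norm_smul, Real.norm_eq_abs, abs_of_nonneg hτ0]
      calc τ * ‖fderiv ℝ h x‖ ≤ τ * M := mul_le_mul_of_nonneg_left (hM x hx) hτ0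
        _ ≤ τ₀ * M := mul_le_mul_of_nonneg_right hττ₀ hMnn
        _ < 1 := hτ₀M
    refine ⟨ContinuousLinearEquiv.unitsEquiv ℝ (E' d) (Units.oneSub _ hn), ?_⟩
    have : ((Units.oneSub (-(τ • fderiv ℝ h x)) hn : ((E' d) →L[ℝ] (E' d))ˣ) : (E' d) →L[ℝ] (E' d))
        = 1 - -(τ • fderiv ℝ h x) := Units.val_oneSub _ hn
    rw [hTdef]
    ext w
    simp only [ContinuousLinearEquiv.coe_coe]
    rw [show (ContinuousLinearEquiv.unitsEquiv ℝ (E' d) (Units.oneSub _ hn)) w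
      = ((Units.oneSub (-(τ • fderiv ℝ h x)) hn : ((E' d) →L[ℝ] (E' d))ˣ) : (E' d) →L[ℝ] (E' d)) w
      from rfl, this]
    simp [sub_neg_eq_add]
  -- positivity of the determinant for small τ
  have hTdet0 : ∀ x : E' d, (T 0 x).det = 1 := by
    intro x
    have : T 0 x = ContinuousLinearMap.id ℝ (E' d) := by
      rw [hTdef]; simp; exact zero_smul ℝ (fderiv ℝ h x)
    rw [this]
    simp [ContinuousLinearMap.det]
  have hdetcont : ContinuousOn (fun p : ℝ × (E' d) => (T p.1 p.2).det) (Icc (0:ℝ) τ₀ ×ˢ B) := by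
    apply ContinuousLinearMap.continuous_det.comp_continuousOn
    rw [hTdef]
    apply ContinuousOn.add continuousOn_const
    apply ContinuousOn.smul (continuous_fst.continuousOn)
    exact hfcont.comp continuous_snd.continuousOn (fun p hp => hBU hp.2)
  obtain ⟨τ₁, hτ₁pos, hτ₁le, hdetpos⟩ : ∃ τ₁, 0 < τ₁ ∧ τ₁ ≤ τ₀ ∧
      ∀ τ ∈ Icc (0:ℝ) τ₁, ∀ x ∈ B, 0 < (T τ x).det := by
    set S : Set (ℝ × (E' d)) := Icc (0:ℝ) τ₀ ×ˢ B with hSdef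
    have hScomp : IsCompact S := isCompact_Icc.prod hBcomp
    set Kbad : Set (ℝ × (E' d)) := S ∩ (fun p : ℝ × (E' d) => (T p.1 p.2).det) ⁻¹' (Iic 0) with hKdef
    have hKclosed : IsClosed Kbad :=
      hdetcont.preimage_isClosed_of_isClosed hScomp.isClosed isClosed_Iic
    have hKcomp : IsCompact Kbad := hScomp.of_isClosed_subset hKclosed inter_subset_left
    by_cases hKemp : Kbad.Nonempty
    · obtain ⟨τm, hτm⟩ := (hKcomp.image continuous_fst).exists_isLeast (hKemp.image _)
      obtain ⟨p, hpmem, hpeq⟩ := hτm.1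
      have hτmpos : 0 < τm := by
        rcases lt_or_eq_of_le hpmem.1.1.1 with hlt | he
        · exact hpeq ▸ hlt
        · exfalso
          have h2 : (T p.1 p.2).det ≤ 0 := hpmem.2
          rw [← he, hTdet0] at h2
          linarith
      refine ⟨min τ₀ (τm / 2), lt_min hτ₀pos (by linarith), min_le_left _ _, ?_⟩
      rintro τ ⟨hτ0, hττ₁⟩ x hx
      by_contra hle
      push_neg at hle
      have hmem2 : (τ, x) ∈ Kbad := ⟨⟨⟨hτ0, le_trans hττ₁ (min_le_left _ _)⟩, hx⟩, hle⟩
      have : τm ≤ τ := hτm.2 ⟨(τ, x), hmem2, rfl⟩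
      have : τm ≤ min τ₀ (τm / 2) := le_trans this hττ₁
      have := le_trans this (min_le_right _ _)
      linarith
    · refine ⟨τ₀, hτ₀pos, le_refl _, ?_⟩
      rintro τ ⟨hτ0, hττ₀⟩ x hx
      by_contra hle
      push_neg at hle
      exact hKemp ⟨(τ, x), ⟨⟨hτ0, hττ₀⟩, hx⟩, hle⟩
  -- the retraction r has unit norm on U
  have hnorm1 : ∀ x ∈ U, ‖x + h x‖ = 1 := by
    intro x hx
    have h1 : ‖x + h x‖ ^ 2 = 1 := by
      rw [← real_inner_self_eq_norm_sq]
      exact hid x hx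
    nlinarith [norm_nonneg (x + h x)]
  -- f τ maps B into B
  have hmaps : ∀ τ ∈ Icc (0:ℝ) τ₁, MapsTo (f τ) B B := by
    rintro τ ⟨hτ0, hττ₁⟩ x hx
    have hxU : x ∈ U := hBU hx
    have hsplit : f τ x = (1 - τ) • x + τ • (x + h x) := by
      rw [hfdef]
      simp only
      rw [smul_add, sub_smul, one_smul]
      abel
    rw [hBdef, mem_closedBall_zero_iff, hsplit]
    have hτ1 : τ ≤ 1 := le_trans hττ₁ (le_trans hτ₁le hτ₀1)
    calc ‖(1 - τ) • x + τ • (x + h x)‖ ≤ ‖(1 - τ) • x‖ + ‖τ • (x + h x)‖ := norm_add_le _ _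
      _ = (1 - τ) * ‖x‖ + τ * ‖x + h x‖ := by
          rw [norm_smul, norm_smul, Real.norm_eq_abs, Real.norm_eq_abs,
            abs_of_nonneg (by linarith : (0:ℝ) ≤ 1 - τ), abs_of_nonneg hτ0]
      _ ≤ (1 - τ) * 1 + τ * 1 := by
          have hx1 : ‖x‖ ≤ 1 := mem_closedBall_zero_iff.mp hx
          have := hnorm1 x hxU
          nlinarith
      _ = 1 := by ring
  -- f τ is surjective onto B
  have hsurj : ∀ τ ∈ Icc (0:ℝ) τ₁, B ⊆ f τ '' B := by
    rintro τ ⟨hτ0, hττ₁⟩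
    have hττ₀ : τ ≤ τ₀ := le_trans hττ₁ hτ₁le
    have hopen_img : IsOpen (f τ '' ball 0 1) := by
      rw [isOpen_iff_mem_nhds]
      rintro y ⟨x, hx, rfl⟩
      have hxU : x ∈ U := hBU (ball_subset_closedBall hx)
      have hxB' : x ∈ B' := hBB' (ball_subset_closedBall hx)
      have hca : ContDiffAt ℝ 1 h x := hh.contDiffAt (hUopen.mem_nhds hxU)
      have hstrict : HasStrictFDerivAt (f τ) (T τ x) x := by
        have h1 : HasStrictFDerivAt h (fderiv ℝ h x) x := hca.hasStrictFDerivAt one_ne_zero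
        exact (hasStrictFDerivAt_id x).add (h1.const_smul τ)
      obtain ⟨e, he⟩ := hunit τ ⟨hτ0, hττ₀⟩ x hxB'
      have hstrict' : HasStrictFDerivAt (f τ) (e : (E' d) →L[ℝ] (E' d)) x := by rwa [he]
      have hmap := hstrict'.map_nhds_eq_of_equiv
      rw [← hmap]
      exact Filter.image_mem_map (isOpen_ball.mem_nhds hx)
    have hfcontB : ContinuousOn (f τ) B := by
      apply ContinuousOn.add continuousOn_id
      exact (hh.continuousOn.mono hBU).const_smul τ
    have himg_closed : IsClosed (f τ '' B) := (hBcomp.image_of_continuousOn hfcontB).isClosed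
    have hzero_mem : f τ 0 ∈ ball (0 : E' d) 1 := by
      rw [mem_ball_zero_iff]
      have h0B' : (0 : E' d) ∈ B' := by
        rw [hB'def, mem_closedBall_zero_iff, norm_zero]; linarith
      calc ‖f τ 0‖ = ‖(0 : E' d) + τ • h 0‖ := rfl
        _ = τ * ‖h 0‖ := by
            rw [zero_add, norm_smul, Real.norm_eq_abs, abs_of_nonneg hτ0]
        _ ≤ τ₀ * Ch := by
            apply mul_le_mul hττ₀ (hCh 0 h0B') (norm_nonneg _) hτ₀pos.le
        _ ≤ 1 / 2 := hτ₀Ch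
        _ < 1 := by norm_num
    intro y hyB
    by_contra hynot
    rcases eq_or_lt_of_le (mem_closedBall_zero_iff.mp hyB) with hy1 | hylt
    · exact hynot ⟨y, hyB, by rw [hfdef]; simp [hsph y hy1]⟩
    have hy_ball : y ∈ ball (0 : E' d) 1 := mem_ball_zero_iff.mpr hylt
    have hpc : IsPreconnected (ball (0 : E' d) 1) := (convex_ball _ _).isPreconnected
    have hcover : ball (0 : E' d) 1 ⊆ f τ '' ball 0 1 ∪ (f τ '' B)ᶜ := by
      intro z hz
      by_cases hzim : z ∈ f τ '' B
      · obtain ⟨w, hwB, hwz⟩ := hzim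
        rcases eq_or_lt_of_le (mem_closedBall_zero_iff.mp hwB) with hw1 | hwlt
        · exfalso
          have : f τ w = w := by rw [hfdef]; simp [hsph w hw1]
          rw [this] at hwz
          rw [← hwz] at hz
          rw [mem_ball_zero_iff] at hz
          rw [hw1] at hz
          linarith
        · exact Or.inl ⟨w, mem_ball_zero_iff.mpr hwlt, hwz⟩
      · exact Or.inr hzim
    have hne1 : (ball (0 : E' d) 1 ∩ f τ '' ball 0 1).Nonempty := by
      refine ⟨f τ 0, hzero_mem, ⟨0, ?_, rfl⟩⟩
      exact mem_ball_zero_iff.mpr (by rw [norm_zero]; norm_num)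
    have hne2 : (ball (0 : E' d) 1 ∩ (f τ '' B)ᶜ).Nonempty := ⟨y, hy_ball, hynot⟩
    obtain ⟨z, _, hz1, hz2⟩ := hpc _ _ hopen_img (isOpen_compl_iff.mpr himg_closed)
      hcover hne1 hne2
    exact hz2 (image_mono ball_subset_closedBall hz1)
  have himgB : ∀ τ ∈ Icc (0:ℝ) τ₁, f τ '' B = B := by
    intro τ hτ
    apply Subset.antisymm
    · exact (hmaps τ hτ).image_subset
    · exact hsurj τ hτ
  -- change of variables
  classical
  set μ := (volume : Measure (EuclideanSpace ℝ (Fin (d+1)))) with hμdef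
  have hBmeas : MeasurableSet B := measurableSet_closedBall
  have hchange : ∀ τ ∈ Icc (0:ℝ) τ₁, ∫⁻ x in B, ENNReal.ofReal |(T τ x).det| ∂μ = μ B := by
    intro τ hτ
    have hcv := lintegral_abs_det_fderiv_eq_addHaar_image μ hBmeas
      (fun x hx => ((hfderiv τ x (hBU hx)).hasFDerivWithinAt))
      (((hinj τ ⟨hτ.1, le_trans hτ.2 hτ₁le⟩)).mono hBB')
    rw [hcv, himgB τ hτ]
  have hdetcont' : ∀ τ : ℝ, ContinuousOn (fun x => (T τ x).det) B := by
    intro τ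
    apply ContinuousLinearMap.continuous_det.comp_continuousOn
    rw [hTdef]
    apply ContinuousOn.add continuousOn_const
    exact ((hfcont.mono hBU).const_smul τ)
  have hVconst : ∀ τ ∈ Icc (0:ℝ) τ₁, ∫ x in B, (T τ x).det ∂μ = (μ B).toReal := by
    intro τ hτ
    have hnn : 0 ≤ᶠ[ae (μ.restrict B)] fun x => (T τ x).det := by
      rw [Filter.EventuallyLE, ae_restrict_iff' hBmeas]
      exact Filter.Eventually.of_forall (fun x hx => (hdetpos τ hτ x hx).le)
    have hmeas' : AEStronglyMeasurable (fun x => (T τ x).det) (μ.restrict B) :=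
      (hdetcont' τ).aestronglyMeasurable hBmeas
    rw [integral_eq_lintegral_of_nonneg_ae hnn hmeas']
    have habs : ∫⁻ x in B, ENNReal.ofReal ((T τ x).det) ∂μ
        = ∫⁻ x in B, ENNReal.ofReal |(T τ x).det| ∂μ := by
      apply setLIntegral_congr_fun hBmeas
      intro x hx
      beta_reduce
      rw [abs_of_pos (hdetpos τ hτ x hx)]
    rw [habs, hchange τ hτ]
  -- matrix representation
  set bE := (EuclideanSpace.basisFun (Fin (d+1)) ℝ).toBasis with hbE
  set Mx : (E' d) → Matrix (Fin (d+1)) (Fin (d+1)) ℝ :=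
    fun x => LinearMap.toMatrix bE bE ↑(fderiv ℝ h x) with hMx
  have hbridge : ∀ (τ : ℝ) (x : E' d), (T τ x).det = (1 + τ • Mx x).det := by
    intro τ x
    have h2 : LinearMap.toMatrix bE bE ((T τ x : (E' d) →L[ℝ] (E' d)) : (E' d) →ₗ[ℝ] (E' d))
        = 1 + τ • Mx x := by
      rw [hTdef]
      simp only [ContinuousLinearMap.coe_add, ContinuousLinearMap.coe_smul,
        ContinuousLinearMap.coe_id]
      rw [map_add, _root_.map_smul, LinearMap.toMatrix_id, hMx]
    rw [ContinuousLinearMap.det, ← LinearMap.det_toMatrix bE, h2]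
  -- entries of Mx are continuous on B
  have hMxval : ∀ (x : E' d) i j,
      Mx x i j = (fderiv ℝ h x (EuclideanSpace.single j 1)) i := by
    intro x i j
    simp only [hMx]
    rw [LinearMap.toMatrix_apply, hbE]
    rw [OrthonormalBasis.coe_toBasis_repr_apply, EuclideanSpace.basisFun_repr,
      OrthonormalBasis.coe_toBasis, EuclideanSpace.basisFun_apply]
    rfl
  have hMxcont : ∀ i j, ContinuousOn (fun x => Mx x i j) B := by
    intro i j
    have h1 : ContinuousOn (fun x => fderiv ℝ h x (EuclideanSpace.single j (1:ℝ))) B :=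
      (ContinuousLinearMap.apply ℝ _ (EuclideanSpace.single j (1:ℝ))).continuous.comp_continuousOn
        (hfcont.mono hBU)
    have h2 : ContinuousOn (fun x => (fderiv ℝ h x (EuclideanSpace.single j (1:ℝ))) i) B :=
      (EuclideanSpace.proj (𝕜 := ℝ) i).continuous.comp_continuousOn h1
    exact h2.congr (fun x hx => hMxval x i j)
  -- determinant expansion as a polynomial in τ
  have hexp : ∀ (τ : ℝ) (x : E' d), (1 + τ • Mx x).det
      = ∑ σ : Equiv.Perm (Fin (d+1)), ∑ t ∈ (Finset.univ : Finset (Fin (d+1))).powerset,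
          (((Equiv.Perm.sign σ : ℤ) : ℝ) * (∏ i ∈ t, (1 : Matrix (Fin (d+1)) (Fin (d+1)) ℝ) (σ i) i)
            * τ ^ (Finset.univ \ t).card) * ∏ i ∈ Finset.univ \ t, Mx x (σ i) i := by
    intro τ x
    rw [Matrix.det_apply]
    apply Finset.sum_congr rfl
    intro σ _
    have hentry : ∀ i, (1 + τ • Mx x) (σ i) i
        = (1 : Matrix (Fin (d+1)) (Fin (d+1)) ℝ) (σ i) i + τ * Mx x (σ i) i := by
      intro i
      simp [Matrix.add_apply, Matrix.smul_apply, smul_eq_mul]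
    rw [show (∏ i, (1 + τ • Mx x) (σ i) i)
        = ∏ i, ((1 : Matrix (Fin (d+1)) (Fin (d+1)) ℝ) (σ i) i + τ * Mx x (σ i) i) from
      Finset.prod_congr rfl (fun i _ => hentry i)]
    rw [Finset.prod_add, Finset.smul_sum]
    apply Finset.sum_congr rfl
    intro t ht
    rw [show (∏ i ∈ Finset.univ \ t, (τ * Mx x (σ i) i))
        = (∏ _i ∈ Finset.univ \ t, τ) * ∏ i ∈ Finset.univ \ t, Mx x (σ i) i from
      Finset.prod_mul_distrib]
    rw [Finset.prod_const]
    rw [Units.smul_def, zsmul_eq_mul]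
    push_cast
    ring
  -- integrability of the coefficients
  have hint : ∀ (σ : Equiv.Perm (Fin (d+1))) (t : Finset (Fin (d+1))),
      IntegrableOn (fun x => ∏ i ∈ Finset.univ \ t, Mx x (σ i) i) B μ := by
    intro σ t
    apply ContinuousOn.integrableOn_compact hBcomp
    apply continuousOn_finset_prod
    intro i _
    exact hMxcont (σ i) i
  set Q : Polynomial ℝ := ∑ σ : Equiv.Perm (Fin (d+1)), ∑ t ∈ (Finset.univ : Finset (Fin (d+1))).powerset,
      Polynomial.C (((Equiv.Perm.sign σ : ℤ) : ℝ)
          * (∏ i ∈ t, (1 : Matrix (Fin (d+1)) (Fin (d+1)) ℝ) (σ i) i)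
          * ∫ x in B, (∏ i ∈ Finset.univ \ t, Mx x (σ i) i) ∂μ)
        * Polynomial.X ^ (Finset.univ \ t).card with hQ
  have hQeval : ∀ τ : ℝ, Q.eval τ = ∫ x in B, (T τ x).det ∂μ := by
    intro τ
    have h1 : ∫ x in B, (T τ x).det ∂μ = ∫ x in B, (1 + τ • Mx x).det ∂μ :=
      integral_congr_ae (Filter.Eventually.of_forall fun x => hbridge τ x)
    have h2 : ∫ x in B, (1 + τ • Mx x).det ∂μ
        = ∑ σ : Equiv.Perm (Fin (d+1)), ∑ t ∈ (Finset.univ : Finset (Fin (d+1))).powerset,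
            (((Equiv.Perm.sign σ : ℤ) : ℝ)
              * (∏ i ∈ t, (1 : Matrix (Fin (d+1)) (Fin (d+1)) ℝ) (σ i) i)
              * τ ^ (Finset.univ \ t).card)
            * ∫ x in B, (∏ i ∈ Finset.univ \ t, Mx x (σ i) i) ∂μ := by
      rw [integral_congr_ae (Filter.Eventually.of_forall fun x => hexp τ x)]
      rw [integral_finset_sum _ (fun σ _ => ?_)]
      · apply Finset.sum_congr rfl
        intro σ _
        rw [integral_finset_sum _ (fun t _ => ?_)]
        · apply Finset.sum_congr rfl
          intro t _
          exact integral_const_mul _ _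
        · exact ((hint σ t).const_mul _)
      · apply integrable_finset_sum
        intro t _
        exact ((hint σ t).const_mul _)
    rw [h1, h2, hQ]
    rw [Polynomial.eval_finset_sum]
    apply Finset.sum_congr rfl
    intro σ _
    rw [Polynomial.eval_finset_sum]
    apply Finset.sum_congr rfl
    intro t _
    simp only [Polynomial.eval_mul, Polynomial.eval_C, Polynomial.eval_pow, Polynomial.eval_X]
    ring
  set vol : ℝ := (μ B).toReal with hvol
  have hQ1 : Q.eval 1 = vol := by
    have hP0 : Q - Polynomial.C vol = 0 := by
      apply Polynomial.eq_zero_of_infinite_isRoot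
      apply Set.Infinite.mono ?_ (Set.Icc_infinite hτ₁pos)
      intro τ hτ
      simp only [mem_setOf_eq, Polynomial.IsRoot, Polynomial.eval_sub, Polynomial.eval_C]
      rw [hQeval τ, hVconst τ hτ]
      ring
    have : Q = Polynomial.C vol := by
      have := sub_eq_zero.mp hP0
      exact this
    rw [this, Polynomial.eval_C]
  -- the determinant of the retraction derivative vanishes inside the ball
  have hid' : ∀ y ∈ U, ⟪f 1 y, f 1 y⟫ = 1 := by
    intro y hy
    have : f 1 y = y + h y := by rw [hfdef]; simp
    rw [this]
    exact hid y hy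
  have hdet0 : ∀ x ∈ ball (0 : E' d) 1, (T 1 x).det = 0 := by
    intro x hx
    have hxU : x ∈ U := hBU (ball_subset_closedBall hx)
    have hr : HasFDerivAt (f 1) (T 1 x) x := hfderiv 1 x hxU
    have hinner : HasFDerivAt (fun y => ⟪f 1 y, f 1 y⟫)
        ((fderivInnerCLM ℝ (f 1 x, f 1 x)).comp ((T 1 x).prod (T 1 x))) x :=
      HasFDerivAt.inner ℝ hr hr
    have hconst : (fun y => ⟪f 1 y, f 1 y⟫) =ᶠ[nhds x] (fun _ => (1:ℝ)) := by
      filter_upwards [hUopen.mem_nhds hxU] with y hy using hid' y hy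
    have hzero : HasFDerivAt (fun y => ⟪f 1 y, f 1 y⟫) (0 : (E' d) →L[ℝ] ℝ) x :=
      (hasFDerivAt_const (1:ℝ) x).congr_of_eventuallyEq hconst
    have heq0 : ((fderivInnerCLM ℝ (f 1 x, f 1 x)).comp ((T 1 x).prod (T 1 x)))
        = (0 : (E' d) →L[ℝ] ℝ) := hinner.unique hzero
    have hval : ∀ w, ⟪(T 1 x) w, f 1 x⟫ = 0 := by
      intro w
      have h3 : ((fderivInnerCLM ℝ (f 1 x, f 1 x)).comp ((T 1 x).prod (T 1 x))) w = 0 := by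
        rw [heq0]; rfl
      rw [ContinuousLinearMap.comp_apply, ContinuousLinearMap.prod_apply,
        fderivInnerCLM_apply] at h3
      simp only at h3
      have h4 : ⟪f 1 x, (T 1 x) w⟫ = ⟪(T 1 x) w, f 1 x⟫ := real_inner_comm _ _
      rw [h4] at h3
      linarith
    by_contra hdne
    have hdne' : LinearMap.det ((T 1 x : (E' d) →L[ℝ] (E' d)) : (E' d) →ₗ[ℝ] (E' d)) ≠ 0 := hdne
    obtain ⟨w, hw⟩ := (LinearMap.equivOfDetNeZero _ hdne').surjective (f 1 x)
    have hcoe : ((LinearMap.equivOfDetNeZero _ hdne' : (E' d) ≃ₗ[ℝ] (E' d)) :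
        (E' d) →ₗ[ℝ] (E' d)) = ((T 1 x : (E' d) →L[ℝ] (E' d)) : (E' d) →ₗ[ℝ] (E' d)) :=
      LinearEquiv.coe_ofIsUnitDet _
    have hw' : (T 1 x) w = f 1 x := by
      have : ((LinearMap.equivOfDetNeZero _ hdne' : (E' d) ≃ₗ[ℝ] (E' d)) :
          (E' d) →ₗ[ℝ] (E' d)) w = f 1 x := hw
      rwa [hcoe] at this
    have h5 := hval w
    rw [hw'] at h5
    rw [hid' x hxU] at h5
    linarith
  -- the integral at τ = 1 vanishes
  have hzero_int : ∫ x in B, (T 1 x).det ∂μ = 0 := by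
    have hsph0 : μ (sphere (0 : E' d) 1) = 0 := Measure.addHaar_sphere μ 0 1
    have hae : (fun x => (T 1 x).det) =ᶠ[ae (μ.restrict B)] (fun _ => (0:ℝ)) := by
      rw [Filter.EventuallyEq, ae_restrict_iff' hBmeas]
      rw [ae_iff]
      apply measure_mono_null ?_ hsph0
      intro x hx
      simp only [mem_setOf_eq] at hx
      push_neg at hx
      obtain ⟨hxB, hxne⟩ := hx
      rw [mem_sphere_zero_iff_norm]
      rcases eq_or_lt_of_le (mem_closedBall_zero_iff.mp hxB) with h1 | hlt
      · exact h1
      · exact absurd (hdet0 x (mem_ball_zero_iff.mpr hlt)) hxne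
    rw [integral_congr_ae hae]
    simp
  -- contradiction
  have hμpos : 0 < vol :=
    ENNReal.toReal_pos (measure_closedBall_pos μ _ one_pos).ne' measure_closedBall_lt_top.ne
  have : vol = 0 := by rw [← hQ1, hQeval 1, hzero_int]
  linarith

theorem brouwer_euclid {d : ℕ} (f : (E' d) → (E' d)) (hf : ContinuousOn f (closedBall 0 1))
    (hmap : MapsTo f (closedBall 0 1) (closedBall 0 1)) :
    ∃ x ∈ closedBall (0 : E' d) 1, f x = x := by
  by_contra hno
  push_neg at hno
  set B : Set (E' d) := closedBall 0 1 with hBdef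
  have hBcomp : IsCompact B := isCompact_closedBall _ _
  have hcont : ContinuousOn (fun x => ‖x - f x‖) B := (continuousOn_id.sub hf).norm
  obtain ⟨x₀, hx₀B, hx₀min⟩ := hBcomp.exists_isMinOn
    ⟨0, by simp [hBdef]⟩ hcont
  set ε₀ : ℝ := ‖x₀ - f x₀‖ with hε₀def
  have hε₀pos : 0 < ε₀ := by
    rw [hε₀def, norm_pos_iff, sub_ne_zero]
    exact fun hc => hno x₀ hx₀B hc.symm
  set ε : ℝ := min (ε₀ / 5) (1 / 2) with hεdef
  have hεpos : 0 < ε := lt_min (by linarith) (by norm_num)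
  have hε5 : ε ≤ ε₀ / 5 := min_le_left _ _
  have hεhalf : ε ≤ 1 / 2 := min_le_right _ _
  obtain ⟨g, hgC, hge⟩ := smooth_approx f hf hεpos
  set c : ℝ := (1 + 2 * ε)⁻¹ with hcdef
  have hcpos : 0 < c := by rw [hcdef]; positivity
  set g₁ : (E' d) → (E' d) := fun x => c • g x with hg₁def
  have hg₁C : ContDiff ℝ 1 g₁ := hgC.const_smul c
  have hgb : ∀ x ∈ B, ‖g x‖ ≤ 1 + ε := by
    intro x hx
    calc ‖g x‖ ≤ ‖f x‖ + ‖g x - f x‖ := by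
          have := norm_add_le (f x) (g x - f x)
          simpa using this
      _ ≤ 1 + ε := add_le_add (mem_closedBall_zero_iff.mp (hmap hx)) (hge x hx)
  set ρ : ℝ := (1 + ε) / (1 + 2 * ε) with hρdef
  have hρlt : ρ < 1 := by
    rw [hρdef, div_lt_one (by positivity)]
    linarith
  have hg₁b : ∀ x ∈ B, ‖g₁ x‖ ≤ ρ := by
    intro x hx
    rw [hg₁def]
    simp only
    rw [norm_smul, Real.norm_eq_abs, abs_of_pos hcpos, hρdef, hcdef]
    rw [div_eq_inv_mul]
    exact mul_le_mul_of_nonneg_left (hgb x hx) (by positivity)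
  have hcmul : c * (1 + 2 * ε) = 1 := by
    rw [hcdef]
    exact inv_mul_cancel₀ (by positivity)
  have hc1 : c ≤ 1 := by nlinarith
  have hg₁f : ∀ x ∈ B, ‖g₁ x - f x‖ ≤ 4 * ε := by
    intro x hx
    have h1 : ‖g₁ x - g x‖ = (1 - c) * ‖g x‖ := by
      rw [hg₁def]
      simp only
      rw [show c • g x - g x = -((1 - c) • g x) by rw [sub_smul, one_smul]; abel]
      rw [norm_neg, norm_smul, Real.norm_eq_abs, abs_of_nonneg (by linarith)]
    have h2 : ‖g₁ x - f x‖ ≤ ‖g₁ x - g x‖ + ‖g x - f x‖ := by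
      have := dist_triangle (g₁ x) (g x) (f x)
      simpa [dist_eq_norm] using this
    have h3 := hgb x hx
    have h4 := hge x hx
    have h5 : (1 - c) * ‖g x‖ ≤ (1 - c) * (1 + ε) :=
      mul_le_mul_of_nonneg_left h3 (by linarith)
    have h6 : (1 - c) * (1 + ε) ≤ 3 * ε := by nlinarith
    calc ‖g₁ x - f x‖ ≤ ‖g₁ x - g x‖ + ‖g x - f x‖ := h2
      _ = (1 - c) * ‖g x‖ + ‖g x - f x‖ := by rw [h1]
      _ ≤ 3 * ε + ε := add_le_add (le_trans h5 h6) h4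
      _ = 4 * ε := by ring
  have hg₁fix : ∀ x ∈ B, g₁ x ≠ x := by
    intro x hx hfix
    have hmin : ε₀ ≤ ‖x - f x‖ := hx₀min hx
    have : ‖x - f x‖ = ‖g₁ x - f x‖ := by rw [hfix]
    have h7 := hg₁f x hx
    have : ε₀ ≤ 4 * ε := by linarith [this ▸ hmin]
    linarith [hε5]
  obtain ⟨U, hret, hUopen, hBU, hhC, hid, hsph⟩ :=
    retraction_construction g₁ hg₁C hρlt hg₁b hg₁fix
  exact absurd (no_retraction U hret hUopen hBU hhC hid hsph) not_false

theorem brouwer_ball {G : Type*} [NormedAddCommGroup G] [InnerProductSpace ℝ G]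
    [FiniteDimensional ℝ G] {R : ℝ} (hR : 0 < R) (f : G → G)
    (hf : ContinuousOn f (closedBall 0 R)) (hmap : MapsTo f (closedBall 0 R) (closedBall 0 R)) :
    ∃ x ∈ closedBall (0 : G) R, f x = x := by
  rcases subsingleton_or_nontrivial G with hsub | hnt
  · refine ⟨0, by simp [hR.le], Subsingleton.elim _ _⟩
  obtain ⟨d, hd⟩ : ∃ d, Module.finrank ℝ G = d + 1 :=
    ⟨Module.finrank ℝ G - 1, (Nat.succ_pred_eq_of_pos Module.finrank_pos).symm⟩
  set L : G ≃ₗᵢ[ℝ] EuclideanSpace ℝ (Fin (d + 1)) :=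
    ((stdOrthonormalBasis ℝ G).reindex (finCongr hd)).repr with hL
  set F : (E' d) → (E' d) := fun y => R⁻¹ • L (f (L.symm (R • y))) with hF
  have hLsymm_norm : ∀ y : E' d, ‖L.symm y‖ = ‖y‖ := fun y => L.symm.norm_map y
  have hL_norm : ∀ x : G, ‖L x‖ = ‖x‖ := fun x => L.norm_map x
  have hmem : ∀ y : E' d, y ∈ closedBall (0 : E' d) 1 → L.symm (R • y) ∈ closedBall (0 : G) R := by
    intro y hy
    rw [mem_closedBall_zero_iff] at hy ⊢
    rw [hLsymm_norm, norm_smul, Real.norm_eq_abs, abs_of_pos hR]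
    nlinarith
  have hFmap : MapsTo F (closedBall 0 1) (closedBall 0 1) := by
    intro y hy
    rw [mem_closedBall_zero_iff]
    rw [hF]
    simp only
    rw [norm_smul, Real.norm_eq_abs, abs_of_pos (inv_pos.mpr hR), hL_norm]
    have : ‖f (L.symm (R • y))‖ ≤ R := mem_closedBall_zero_iff.mp (hmap (hmem y hy))
    rw [inv_mul_le_iff₀ hR]
    linarith
  have hFcont : ContinuousOn F (closedBall 0 1) := by
    refine ContinuousOn.const_smul (g := fun y => L (f (L.symm (R • y)))) ?_ R⁻¹
    apply L.continuous.comp_continuousOn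
    apply hf.comp
    · exact (L.symm.continuous.comp (continuous_const_smul R)).continuousOn
    · intro y hy
      exact hmem y hy
  obtain ⟨y, hyB, hyfix⟩ := brouwer_euclid F hFcont hFmap
  refine ⟨L.symm (R • y), hmem y hyB, ?_⟩
  have h1 : R⁻¹ • L (f (L.symm (R • y))) = y := hyfix
  have h2 : L (f (L.symm (R • y))) = R • y := by
    have h2' := congrArg (fun z : E' d => R • z) h1
    simpa [smul_smul, mul_inv_cancel₀ hR.ne'] using h2'
  calc f (L.symm (R • y)) = L.symm (L (f (L.symm (R • y)))) := (L.symm_apply_apply _).symm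
    _ = L.symm (R • y) := by rw [h2]

theorem variational_inequality {G : Type*} [NormedAddCommGroup G] [InnerProductSpace ℝ G]
    [FiniteDimensional ℝ G] {C : Set G} (hC : Convex ℝ C) (hCc : IsCompact C)
    (hne : C.Nonempty) (Gm : G → G) (hGm : Continuous Gm) :
    ∃ x ∈ C, ∀ y ∈ C, ⟪Gm x, y - x⟫ ≤ 0 := by
  have hcomplete : IsComplete C := hCc.isClosed.isComplete
  have hproj : ∀ u : G, ∃ v, v ∈ C ∧ ∀ w ∈ C, ⟪u - v, w - v⟫ ≤ 0 := by
    intro u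
    obtain ⟨v, hvC, hv⟩ := exists_norm_eq_iInf_of_complete_convex hne hcomplete hC u
    exact ⟨v, hvC, (norm_eq_iInf_iff_real_inner_le_zero hC hvC).mp hv⟩
  choose P hPC hP using hproj
  have hPid : ∀ u ∈ C, P u = u := by
    intro u hu
    have h1 := hP u u hu
    have h2 : ‖u - P u‖ ^ 2 ≤ 0 := by
      rw [← real_inner_self_eq_norm_sq]
      exact h1
    have h3 : u - P u = 0 := by
      by_contra hne0
      have : 0 < ‖u - P u‖ := norm_pos_iff.mpr hne0
      nlinarith
    have := sub_eq_zero.mp h3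
    exact this.symm
  have hPlip : LipschitzWith 1 P := by
    apply LipschitzWith.of_dist_le_mul
    intro u₁ u₂
    by_cases hPP : P u₁ = P u₂
    · rw [hPP]
      simp [dist_nonneg]
    have h1 := hP u₁ (P u₂) (hPC u₂)
    have h2 := hP u₂ (P u₁) (hPC u₁)
    have key : ‖P u₁ - P u₂‖ ^ 2 ≤ ⟪u₁ - u₂, P u₁ - P u₂⟫ := by
      have e1 : ⟪u₁ - P u₁, P u₂ - P u₁⟫ ≤ 0 := h1
      have e2 : ⟪u₂ - P u₂, P u₁ - P u₂⟫ ≤ 0 := h2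
      have expand : ⟪u₁ - u₂, P u₁ - P u₂⟫ - ‖P u₁ - P u₂‖ ^ 2
          = (-(⟪u₁ - P u₁, P u₂ - P u₁⟫)) + (-(⟪u₂ - P u₂, P u₁ - P u₂⟫)) := by
        rw [← real_inner_self_eq_norm_sq]
        simp only [inner_sub_left, inner_sub_right]
        ring
      nlinarith [expand]
    have hcs : ⟪u₁ - u₂, P u₁ - P u₂⟫ ≤ ‖u₁ - u₂‖ * ‖P u₁ - P u₂‖ := real_inner_le_norm _ _
    have hpos : 0 < ‖P u₁ - P u₂‖ := norm_pos_iff.mpr (sub_ne_zero.mpr hPP)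
    rw [dist_eq_norm, dist_eq_norm, NNReal.coe_one, one_mul]
    nlinarith
  obtain ⟨R0, hR0⟩ := hCc.isBounded.subset_closedBall 0
  set R : ℝ := max R0 1 with hR
  have hRpos : (0:ℝ) < R := lt_of_lt_of_le one_pos (le_max_right _ _)
  have hCR : C ⊆ closedBall 0 R := subset_trans hR0 (closedBall_subset_closedBall (le_max_left _ _))
  set Ψ : G → G := fun y => P (P y + Gm (P y)) with hΨ
  have hΨcont : Continuous Ψ :=
    hPlip.continuous.comp ((hPlip.continuous).add (hGm.comp hPlip.continuous))
  have hΨmap : MapsTo Ψ (closedBall 0 R) (closedBall 0 R) := fun y _ => hCR (hPC _)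
  obtain ⟨x, hxball, hxfix⟩ := brouwer_ball hRpos Ψ hΨcont.continuousOn hΨmap
  have hxC : x ∈ C := by rw [← hxfix]; exact hPC _
  have hPx : P x = x := hPid x hxC
  have hfix2 : P (x + Gm x) = x := by
    have hx2 : Ψ x = x := hxfix
    simp only [hΨ] at hx2
    rwa [hPx] at hx2
  refine ⟨x, hxC, fun y hy => ?_⟩
  have h6 := hP (x + Gm x) y hy
  rw [hfix2] at h6
  have : x + Gm x - x = Gm x := by abel
  rwa [this] at h6


end BrouwerAux

/-! ### auxiliary lemmas about the cone -/

lemma tpow_pair {m : ℕ} {ι : Type*} [Fintype ι] (A : (Fin (m + 1) → ι) → ℝ) (x : ι → ℝ) :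
    tpow A x = ∑ k, x k * tmap A x k := by
  rw [tpow, ← (Fin.consEquiv (fun _ : Fin (m+1) => ι)).sum_comp
    (fun f => A f * ∏ j, x (f j)), Fintype.sum_prod_type]
  apply Finset.sum_congr rfl
  intro k _
  rw [tmap, Finset.mul_sum]
  apply Finset.sum_congr rfl
  intro g _
  have hprod : (∏ j : Fin (m+1), x (Fin.consEquiv (fun _ : Fin (m+1) => ι) (k, g) j))
      = x k * ∏ j : Fin m, x (g j) := by
    rw [Fin.prod_univ_succ]
    simp [Fin.consEquiv]
  have hA : A (Fin.consEquiv (fun _ : Fin (m+1) => ι) (k, g)) = A (Fin.cons k g) := rfl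
  rw [hprod, hA]
  ring

section Cone

variable {r : ℕ} {n : Fin r → ℕ}

/-- vector supported on a single block -/
def blk (n : Fin r → ℕ) (i : Fin r) (w : Fin (n i + 1) → ℝ) : BIdx n → ℝ :=
  fun k => if h : k.1 = i then w (h ▸ k.2) else 0

lemma blk_same (i : Fin r) (w : Fin (n i + 1) → ℝ) (j : Fin (n i + 1)) :
    blk n i w ⟨i, j⟩ = w j := dif_pos rfl

lemma blk_other (i : Fin r) (w : Fin (n i + 1) → ℝ) {i' : Fin r} (h : i' ≠ i)
    (j : Fin (n i' + 1)) : blk n i w ⟨i', j⟩ = 0 := dif_neg h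

lemma sum_bidx (F : BIdx n → ℝ) : ∑ k, F k = ∑ i, ∑ j, F ⟨i, j⟩ := by
  rw [← Finset.univ_sigma_univ, Finset.sum_sigma]

lemma sum_blk_mul (i : Fin r) (w : Fin (n i + 1) → ℝ) (v : BIdx n → ℝ) :
    ∑ k, blk n i w k * v k = ∑ j, w j * v ⟨i, j⟩ := by
  rw [sum_bidx (fun k => blk n i w k * v k)]
  rw [Finset.sum_eq_single i]
  · exact Finset.sum_congr rfl (fun j _ => by rw [blk_same])
  · intro i' _ hi'
    apply Finset.sum_eq_zero
    intro j _
    rw [blk_other i w hi' j, zero_mul]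
  · intro habs
    exact absurd (Finset.mem_univ i) habs

lemma inK_blk (i : Fin r) (w : Fin (n i + 1) → ℝ)
    (hw : Real.sqrt (∑ j : Fin (n i), w j.succ ^ 2) ≤ w 0) : inK n (blk n i w) := by
  intro i'
  by_cases h : i' = i
  · subst h
    have h1 : (∑ j : Fin (n i'), (blk n i' w ⟨i', j.succ⟩) ^ 2) = ∑ j : Fin (n i'), w j.succ ^ 2 :=
      Finset.sum_congr rfl (fun j _ => by rw [blk_same])
    rw [h1, blk_same]
    exact hw
  · have h1 : (∑ j : Fin (n i'), (blk n i w ⟨i', j.succ⟩) ^ 2) = 0 :=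
      Finset.sum_eq_zero (fun j _ => by rw [blk_other i w h]; ring)
    rw [h1, blk_other i w h, Real.sqrt_zero]

lemma inK_head_nonneg {x : BIdx n → ℝ} (hx : inK n x) (i : Fin r) : 0 ≤ x ⟨i, 0⟩ :=
  le_trans (Real.sqrt_nonneg _) (hx i)

lemma inK_spine_sq_le {x : BIdx n → ℝ} (hx : inK n x) (i : Fin r) :
    ∑ j : Fin (n i), x ⟨i, j.succ⟩ ^ 2 ≤ x ⟨i, 0⟩ ^ 2 := by
  have h1 := hx i
  have h2 : Real.sqrt (∑ j : Fin (n i), x ⟨i, j.succ⟩ ^ 2) ^ 2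
      ≤ x ⟨i, 0⟩ ^ 2 := by
    apply pow_le_pow_left₀ (Real.sqrt_nonneg _) h1
  rwa [Real.sq_sqrt (Finset.sum_nonneg fun j _ => sq_nonneg _)] at h2
lemma eT_pos_of_ne_zero {x : BIdx n → ℝ} (hx : inK n x) (hx0 : x ≠ 0) : 0 < eT n x := by
  have hnn : 0 ≤ eT n x := Finset.sum_nonneg (fun i _ => inK_head_nonneg hx i)
  rcases lt_or_eq_of_le hnn with h | h
  · exact h
  exfalso
  have hheads : ∀ i, x ⟨i, 0⟩ = 0 := by
    intro i
    have := (Finset.sum_eq_zero_iff_of_nonneg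
      (fun i _ => inK_head_nonneg hx i)).mp h.symm i (Finset.mem_univ i)
    exact this
  apply hx0
  funext k
  obtain ⟨i, j⟩ := k
  have hsq : ∑ j : Fin (n i), x ⟨i, j.succ⟩ ^ 2 ≤ 0 := by
    have := inK_spine_sq_le hx i
    rw [hheads i] at this
    simpa using this
  have hzero : ∀ j' : Fin (n i), x ⟨i, j'.succ⟩ = 0 := by
    intro j'
    have h0 : (∑ j : Fin (n i), x ⟨i, j.succ⟩ ^ 2) = 0 :=
      le_antisymm hsq (Finset.sum_nonneg fun _ _ => sq_nonneg _)
    have := (Finset.sum_eq_zero_iff_of_nonneg (fun _ _ => sq_nonneg _)).mp h0 j' (Finset.mem_univ j')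
    exact (pow_eq_zero_iff two_ne_zero).mp this
  rcases Fin.eq_zero_or_eq_succ j with hj | ⟨j', hj⟩
  · rw [hj]; exact hheads i
  · rw [hj]; exact hzero j'

lemma inK_smul {x : BIdx n → ℝ} (hx : inK n x) {c : ℝ} (hc : 0 ≤ c) :
    inK n (fun k => c * x k) := by
  intro i
  have h1 : (∑ j : Fin (n i), (c * x ⟨i, j.succ⟩) ^ 2)
      = c ^ 2 * ∑ j : Fin (n i), x ⟨i, j.succ⟩ ^ 2 := by
    rw [Finset.mul_sum]
    exact Finset.sum_congr rfl (fun j _ => by ring)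
  rw [h1, Real.sqrt_mul (sq_nonneg c), Real.sqrt_sq hc]
  exact mul_le_mul_of_nonneg_left (hx i) hc

/-- self-duality of the product of second-order cones -/
lemma selfdual (v : BIdx n → ℝ)
    (hv : ∀ y : BIdx n → ℝ, inK n y → 0 ≤ ∑ k, y k * v k) : inK n v := by
  intro i
  set S : ℝ := ∑ j : Fin (n i), v ⟨i, j.succ⟩ ^ 2 with hS
  have hSnn : 0 ≤ S := Finset.sum_nonneg fun _ _ => sq_nonneg _
  -- head is nonnegative
  have hhead : 0 ≤ v ⟨i, 0⟩ := by
    have h2 := hv (blk n i (Fin.cons 1 0)) (inK_blk i _ (by simp))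
    rw [sum_blk_mul] at h2
    rw [Fin.sum_univ_succ] at h2
    simpa using h2
  -- main test vector
  set w : Fin (n i + 1) → ℝ := Fin.cons (Real.sqrt S) (fun j => -v ⟨i, j.succ⟩) with hw
  have hwK : inK n (blk n i w) := by
    apply inK_blk
    have : (∑ j : Fin (n i), w j.succ ^ 2) = S := by
      apply Finset.sum_congr rfl
      intro j _
      rw [hw, Fin.cons_succ]
      ring
    rw [this, hw, Fin.cons_zero]
  have h3 := hv _ hwK
  rw [sum_blk_mul, Fin.sum_univ_succ] at h3
  have h4 : w 0 * v ⟨i, 0⟩ = Real.sqrt S * v ⟨i, 0⟩ := by rw [hw]; rw [Fin.cons_zero]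
  have h5 : (∑ j : Fin (n i), w j.succ * v ⟨i, j.succ⟩) = -S := by
    rw [hS, ← Finset.sum_neg_distrib]
    apply Finset.sum_congr rfl
    intro j _
    rw [hw, Fin.cons_succ]
    ring
  rw [h4, h5] at h3
  rcases eq_or_lt_of_le hSnn with hS0 | hSpos
  · rw [← hS0, Real.sqrt_zero]
    exact hhead
  · have hsq : Real.sqrt S * Real.sqrt S = S := Real.mul_self_sqrt hSnn
    have hspos : 0 < Real.sqrt S := Real.sqrt_pos.mpr hSpos
    nlinarith

end Cone


/-- If `A` is strictly `K`-positive on the product of second-order cones `K`, the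
second-order cone tensor eigenvalue complementarity problem has a solution:
there are `x ≠ 0`, `x ∈ K`, and `λ ∈ ℝ` with `w = λ A x^m - B x^m ∈ K` and
`⟨x, w⟩ = 0`. Here the tensors have order `m + 1`. -/
theorem socteicp_has_solution {r : ℕ} (n : Fin r → ℕ) (hr : 0 < r) {m : ℕ}
    (A B : (Fin (m + 1) → BIdx n) → ℝ)
    (hpos : ∀ x : BIdx n → ℝ, inK n x → x ≠ 0 → 0 < tpow A x) :
    ∃ (x : BIdx n → ℝ) (lam : ℝ), x ≠ 0 ∧ inK n x ∧
      inK n (fun k => lam * tmap A x k - tmap B x k) ∧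
      ∑ k, x k * (lam * tmap A x k - tmap B x k) = 0 := by
  classical
  -- work in the euclidean space on the index type
  have hinner : ∀ u v : EuclideanSpace ℝ (BIdx n), ⟪u, v⟫ = ∑ k, u k * v k := by
    intro u v
    rw [PiLp.inner_apply]
    apply Finset.sum_congr rfl
    intro k _
    simp [RCLike.inner_apply, conj_trivial]; ring
  have hcoordc : ∀ k : BIdx n, Continuous (fun x : EuclideanSpace ℝ (BIdx n) => x k) :=
    fun k => (EuclideanSpace.proj (𝕜 := ℝ) k).continuous
  set C : Set (EuclideanSpace ℝ (BIdx n)) := {x | inK n x ∧ eT n x = 1} with hC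
  -- C is nonempty
  have hCne : C.Nonempty := by
    refine ⟨WithLp.toLp 2 (blk n ⟨0, hr⟩ (Fin.cons 1 0)), ?_, ?_⟩
    · apply inK_blk
      simp
    · rw [eT, WithLp.ofLp_toLp]
      rw [Finset.sum_eq_single (⟨0, hr⟩ : Fin r)]
      · rw [blk_same]; simp
      · intro i' _ hi'
        rw [blk_other _ _ hi']
      · intro habs
        exact absurd (Finset.mem_univ _) habs
  -- spine extraction
  set spv : (i : Fin r) → (BIdx n → ℝ) → EuclideanSpace ℝ (Fin (n i)) :=
    fun i x => (EuclideanSpace.equiv (Fin (n i)) ℝ).symm (fun j => x ⟨i, j.succ⟩) with hspv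
  have hspv_norm : ∀ (i : Fin r) (x : BIdx n → ℝ),
      Real.sqrt (∑ j : Fin (n i), x ⟨i, j.succ⟩ ^ 2) = ‖spv i x‖ := by
    intro i x
    rw [EuclideanSpace.norm_eq]
    congr 1
    apply Finset.sum_congr rfl
    intro j _
    rw [Real.norm_eq_abs, sq_abs]
    rfl
  -- C is convex
  have hCconv : Convex ℝ C := by
    rintro x ⟨hxK, hxe⟩ y ⟨hyK, hye⟩ a b ha hb hab
    have hcoord : ∀ k, (a • x + b • y) k = a * x k + b * y k := fun k => rfl
    constructor
    · intro i
      have h1 : Real.sqrt (∑ j : Fin (n i), (a • x + b • y) ⟨i, j.succ⟩ ^ 2)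
          = ‖a • spv i x + b • spv i y‖ := by
        rw [hspv_norm i (a • x + b • y).ofLp]
        congr 1
      rw [h1]
      calc ‖a • spv i x + b • spv i y‖ ≤ ‖a • spv i x‖ + ‖b • spv i y‖ := norm_add_le _ _
        _ = a * ‖spv i x‖ + b * ‖spv i y‖ := by
            rw [norm_smul, norm_smul, Real.norm_eq_abs, Real.norm_eq_abs,
              abs_of_nonneg ha, abs_of_nonneg hb]
        _ ≤ a * x ⟨i, 0⟩ + b * y ⟨i, 0⟩ := by
            apply add_le_add
            · exact mul_le_mul_of_nonneg_left (by rw [← hspv_norm]; exact hxK i) ha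
            · exact mul_le_mul_of_nonneg_left (by rw [← hspv_norm]; exact hyK i) hb
        _ = (a • x + b • y) ⟨i, 0⟩ := (hcoord ⟨i, 0⟩).symm
    · rw [eT]
      calc (∑ i, (a • x + b • y) ⟨i, 0⟩) = ∑ i, (a * x ⟨i, 0⟩ + b * y ⟨i, 0⟩) :=
            Finset.sum_congr rfl (fun i _ => hcoord ⟨i, 0⟩)
        _ = a * eT n x + b * eT n y := by
            rw [Finset.sum_add_distrib, ← Finset.mul_sum, ← Finset.mul_sum, eT, eT]
        _ = 1 := by rw [hxe, hye]; linarith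
  -- C is compact
  have hCclosed : IsClosed C := by
    have h1 : C = (⋂ i, {x : EuclideanSpace ℝ (BIdx n) |
        Real.sqrt (∑ j : Fin (n i), x ⟨i, j.succ⟩ ^ 2) ≤ x ⟨i, 0⟩})
        ∩ {x | eT n x = 1} := by
      ext x
      simp only [hC, mem_setOf_eq, mem_inter_iff, mem_iInter]
      rfl
    rw [h1]
    apply IsClosed.inter
    · apply isClosed_iInter
      intro i
      apply isClosed_le
      · apply Real.continuous_sqrt.comp
        apply continuous_finset_sum
        intro j _
        exact (hcoordc ⟨i, j.succ⟩).pow 2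
      · exact hcoordc ⟨i, 0⟩
    · apply isClosed_eq _ continuous_const
      apply continuous_finset_sum
      intro i _
      exact hcoordc ⟨i, 0⟩
  have hCbd : ∀ x ∈ C, ∀ k : BIdx n, |x k| ≤ 1 := by
    rintro x ⟨hxK, hxe⟩ k
    have hhead1 : ∀ i : Fin r, x ⟨i, 0⟩ ≤ 1 := by
      intro i
      have h1 : x ⟨i, 0⟩ ≤ eT n x :=
        Finset.single_le_sum (fun i' _ => inK_head_nonneg hxK i') (Finset.mem_univ i)
      rw [hxe] at h1
      exact h1
    obtain ⟨i, j⟩ := k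
    rcases Fin.eq_zero_or_eq_succ j with hj | ⟨j', hj⟩
    · subst hj
      rw [abs_of_nonneg (inK_head_nonneg hxK i)]
      exact hhead1 i
    · subst hj
      have h1 : x ⟨i, j'.succ⟩ ^ 2 ≤ ∑ j'' : Fin (n i), x ⟨i, j''.succ⟩ ^ 2 :=
        Finset.single_le_sum (f := fun j'' : Fin (n i) => x ⟨i, j''.succ⟩ ^ 2)
          (fun _ _ => sq_nonneg _) (Finset.mem_univ j')
      have h2 := inK_spine_sq_le hxK i
      have h3 := inK_head_nonneg hxK i
      have h4 := hhead1 i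
      rw [abs_le]
      constructor <;> nlinarith
  have hCcomp : IsCompact C := by
    apply Metric.isCompact_of_isClosed_isBounded hCclosed
    rw [Metric.isBounded_iff_subset_closedBall 0]
    refine ⟨(Fintype.card (BIdx n) : ℝ) + 1, ?_⟩
    intro x hx
    rw [mem_closedBall_zero_iff, EuclideanSpace.norm_eq]
    have h1 : (∑ k : BIdx n, ‖x k‖ ^ 2) ≤ (Fintype.card (BIdx n) : ℝ) := by
      calc (∑ k : BIdx n, ‖x k‖ ^ 2) ≤ ∑ _k : BIdx n, (1:ℝ) := by
            apply Finset.sum_le_sum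
            intro k _
            have := hCbd x hx k
            rw [Real.norm_eq_abs]
            nlinarith [abs_nonneg (x k)]
        _ = (Fintype.card (BIdx n) : ℝ) := by simp
    calc Real.sqrt (∑ k : BIdx n, ‖x k‖ ^ 2) ≤ Real.sqrt (Fintype.card (BIdx n)) :=
          Real.sqrt_le_sqrt h1
      _ ≤ (Fintype.card (BIdx n) : ℝ) + 1 := by
          rw [show ((Fintype.card (BIdx n) : ℝ) + 1) = Real.sqrt (((Fintype.card (BIdx n) : ℝ) + 1)^2) by
            rw [Real.sqrt_sq (by positivity)]]
          apply Real.sqrt_le_sqrt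
          nlinarith [Nat.cast_nonneg (α := ℝ) (Fintype.card (BIdx n))]
  -- the vector field
  have htmapc : ∀ (T : (Fin (m + 1) → BIdx n) → ℝ) (k : BIdx n),
      Continuous (fun x : EuclideanSpace ℝ (BIdx n) => tmap T x k) := by
    intro T k
    apply continuous_finset_sum
    intro f _
    exact continuous_const.mul (continuous_finset_prod _ (fun j _ => hcoordc (f j)))
  have htpowc : ∀ (T : (Fin (m + 1) → BIdx n) → ℝ),
      Continuous (fun x : EuclideanSpace ℝ (BIdx n) => tpow T x) := by
    intro T
    apply continuous_finset_sum
    intro f _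
    exact continuous_const.mul (continuous_finset_prod _ (fun j _ => hcoordc (f j)))
  set G : EuclideanSpace ℝ (BIdx n) → EuclideanSpace ℝ (BIdx n) :=
    fun x => (EuclideanSpace.equiv (BIdx n) ℝ).symm
      (fun k => tpow A x * tmap B x k - tpow B x * tmap A x k) with hG
  have hGcoord : ∀ (x : EuclideanSpace ℝ (BIdx n)) (k : BIdx n),
      G x k = tpow A x * tmap B x k - tpow B x * tmap A x k := fun x k => rfl
  have hGcont : Continuous G := by
    apply (EuclideanSpace.equiv (BIdx n) ℝ).symm.continuous.comp
    apply continuous_pi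
    intro k
    exact ((htpowc A).mul (htmapc B k)).sub ((htpowc B).mul (htmapc A k))
  obtain ⟨z, hzC, hVI⟩ := variational_inequality hCconv hCcomp hCne G hGcont
  obtain ⟨hzK, hze⟩ := hzC
  have hz0 : z.ofLp ≠ 0 := by
    intro hz
    rw [hz] at hze
    rw [eT] at hze
    simp at hze
  have hα : 0 < tpow A z := hpos z hzK hz0
  -- orthogonality of the field
  have hGzz : ⟪G z, z⟫ = 0 := by
    rw [hinner]
    have h1 : ∀ k, G z k * z k
        = tpow A z * (z k * tmap B z k) - tpow B z * (z k * tmap A z k) := by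
      intro k
      rw [hGcoord]
      ring
    rw [Finset.sum_congr rfl (fun k _ => h1 k), Finset.sum_sub_distrib,
      ← Finset.mul_sum, ← Finset.mul_sum, ← tpow_pair, ← tpow_pair]
    ring
  -- the field is nonpositive against the whole cone
  have hKyle : ∀ y : BIdx n → ℝ, inK n y → ∑ k, y k * G z k ≤ 0 := by
    intro y hy
    by_cases hy0 : y = 0
    · rw [hy0]
      simp
    have hety : 0 < eT n y := eT_pos_of_ne_zero hy hy0
    set c : ℝ := (eT n y)⁻¹ with hc
    have hcpos : 0 < c := inv_pos.mpr hety
    have hy'K : inK n (fun k => c * y k) := inK_smul hy hcpos.le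
    have hy'e : eT n (fun k => c * y k) = 1 := by
      rw [eT, ← Finset.mul_sum, ← eT, hc]
      exact inv_mul_cancel₀ hety.ne'
    have hy'C : WithLp.toLp 2 (fun k => c * y k) ∈ C := ⟨hy'K, hy'e⟩
    have h2 := hVI _ hy'C
    rw [inner_sub_right, hGzz, sub_zero, hinner, WithLp.ofLp_toLp] at h2
    have h3 : (∑ k, G z k * (c * y k)) = c * ∑ k, y k * G z k := by
      rw [Finset.mul_sum]
      apply Finset.sum_congr rfl
      intro k _
      ring
    rw [h3] at h2
    nlinarith
  set lam : ℝ := tpow B z / tpow A z with hlamdef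
  have hlam : lam * tpow A z = tpow B z := div_mul_cancel₀ _ hα.ne'
  set w : BIdx n → ℝ := fun k => lam * tmap A z k - tmap B z k with hwdef
  have hGw : ∀ k, G z k = -(tpow A z * w k) := by
    intro k
    rw [hGcoord, hwdef]
    simp only
    linear_combination (tmap A z k) * hlam
  have hwK : inK n w := by
    apply selfdual
    intro y hy
    have h1 := hKyle y hy
    have h2 : (∑ k, y k * G z k) = -(tpow A z * ∑ k, y k * w k) := by
      rw [Finset.mul_sum, ← Finset.sum_neg_distrib]
      apply Finset.sum_congr rfl
      intro k _
      rw [hGw k]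
      ring
    rw [h2] at h1
    nlinarith
  have hcomp : ∑ k, z k * w k = 0 := by
    have h1 : ∀ k, z k * w k = lam * (z k * tmap A z k) - z k * tmap B z k := by
      intro k
      rw [hwdef]
      ring
    rw [Finset.sum_congr rfl (fun k _ => h1 k), Finset.sum_sub_distrib, ← Finset.mul_sum,
      ← tpow_pair, ← tpow_pair, hlam]
    ring
  exact ⟨z, lam, hz0, hzK, hwK, hcomp⟩
end
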